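/- arXiv:1803.09187 — 5 statements merged into one kernel-verified Lean document; each statement's English description precedes it below -/
import Mathlib

section
/- For positive integers n ≥ k and any real (or commutative ring element) x, the identity ∑_{j=k}^{n} (-1)^{j-k} * C(n, j) * C(j-1, k-1) * x^j = ∑_{j=k}^{n} C(n, j) * x^j * (1-x)^{n-j} holds. -/
open Finset

lemma alt_partial (m : ℕ) : ∀ r : ℕ,
    ∑ j ∈ Finset.range (r + 1), (-1 : ℝ) ^ j * ((m + 1).choose j : ℝ)
      = (-1) ^ r * (m.choose r : ℝ) := by
  intro r
  induction r with
  | zero => simp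
  | succ r ih =>
    rw [Finset.sum_range_succ, ih, Nat.choose_succ_succ (m) (r)]
    push_cast
    rw [pow_succ]
    ring

lemma key (m k : ℕ) (hk : 1 ≤ k) (hkm : k ≤ m) :
    ∑ j ∈ Finset.Icc k m, (-1 : ℝ) ^ (m - j) * (m.choose j : ℝ)
      = (-1) ^ (m - k) * ((m - 1).choose (k - 1) : ℝ) := by
  obtain ⟨m, rfl⟩ : ∃ m', m = m' + 1 := ⟨m - 1, by omega⟩
  obtain ⟨k, rfl⟩ : ∃ k', k = k' + 1 := ⟨k - 1, by omega⟩
  have htot : ∑ j ∈ Finset.range (m + 2), (-1 : ℝ) ^ j * ((m + 1).choose j : ℝ) = 0 := by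
    have := Int.alternating_sum_range_choose_of_ne (n := m + 1) (by omega)
    have := congrArg (fun z : ℤ => (z : ℝ)) this
    push_cast at this
    simpa using this
  have hsplit : Finset.range (m + 2) = Finset.range (k + 1) ∪ Finset.Icc (k + 1) (m + 1) := by
    ext j; simp [Finset.mem_range, Finset.mem_Icc]; omega
  have hdisj : Disjoint (Finset.range (k + 1)) (Finset.Icc (k + 1) (m + 1)) := by
    simp [Finset.disjoint_left, Finset.mem_range, Finset.mem_Icc]; omega
  rw [hsplit, Finset.sum_union hdisj, alt_partial m k] at htot
  have hIcc : ∑ j ∈ Finset.Icc (k + 1) (m + 1), (-1 : ℝ) ^ j * ((m + 1).choose j : ℝ)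
      = -((-1) ^ k * (m.choose k : ℝ)) := by linarith
  have hpow : ∀ j ∈ Finset.Icc (k + 1) (m + 1),
      (-1 : ℝ) ^ (m + 1 - j) * ((m + 1).choose j : ℝ)
        = (-1) ^ (m + 1) * ((-1) ^ j * ((m + 1).choose j : ℝ)) := by
    intro j hj
    simp only [Finset.mem_Icc] at hj
    have h1 : (-1 : ℝ) ^ (m + 1 - j) * (-1) ^ j = (-1) ^ (m + 1) := by
      rw [← pow_add]; congr 1; omega
    have h2 : (-1 : ℝ) ^ j * (-1) ^ j = 1 := by
      rw [← pow_add, ← two_mul, pow_mul]; norm_num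
    calc (-1 : ℝ) ^ (m + 1 - j) * ((m + 1).choose j : ℝ)
        = ((-1 : ℝ) ^ (m + 1 - j) * (-1) ^ j) * ((-1) ^ j * ((m + 1).choose j : ℝ)) := by
          rw [mul_assoc, ← mul_assoc ((-1:ℝ)^j), h2, one_mul]
      _ = (-1) ^ (m + 1) * ((-1) ^ j * ((m + 1).choose j : ℝ)) := by rw [h1]
  rw [Finset.sum_congr rfl hpow, ← Finset.mul_sum, hIcc]
  have h3 : (-1 : ℝ) ^ (m + 1) * -((-1) ^ k) = (-1) ^ (m + 1 - (k + 1)) := by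
    have h4 : (-1 : ℝ) ^ (m + 1 - (k+1)) * ((-1) ^ (k+1)) = (-1) ^ (m + 1) := by
      rw [← pow_add]; congr 1; omega
    have h2 : (-1 : ℝ) ^ (k+1) * (-1) ^ (k+1) = 1 := by
      rw [← pow_add, ← two_mul, pow_mul]; norm_num
    calc (-1 : ℝ) ^ (m + 1) * -((-1) ^ k)
        = ((-1 : ℝ) ^ (m + 1 - (k+1)) * ((-1) ^ (k+1))) * ((-1) ^ (k+1)) := by
          rw [h4, pow_succ]; ring
      _ = (-1 : ℝ) ^ (m + 1 - (k+1)) * ((-1 : ℝ) ^ (k+1) * (-1) ^ (k+1)) := by ring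
      _ = _ := by rw [h2, mul_one]
  simp only [Nat.add_sub_cancel]
  calc (-1 : ℝ) ^ (m + 1) * (-((-1) ^ k * (m.choose k : ℝ)))
      = ((-1 : ℝ) ^ (m + 1) * -((-1) ^ k)) * (m.choose k : ℝ) := by ring
    _ = _ := by rw [h3]

theorem binomial_identity (n k : ℕ) (hk : 1 ≤ k) (hkn : k ≤ n) (x : ℝ) :
    ∑ j ∈ Finset.Icc k n, (-1 : ℝ) ^ (j - k) * (n.choose j : ℝ) * ((j - 1).choose (k - 1) : ℝ) * x ^ j =
      ∑ j ∈ Finset.Icc k n, (n.choose j : ℝ) * x ^ j * (1 - x) ^ (n - j) := by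
  -- expand (1-x)^(n-j)
  have step1 : ∀ j ∈ Finset.Icc k n,
      (n.choose j : ℝ) * x ^ j * (1 - x) ^ (n - j)
        = ∑ m ∈ Finset.Icc j n,
            (-1 : ℝ) ^ (m - j) * ((n.choose j : ℝ) * ((n - j).choose (m - j) : ℝ)) * x ^ m := by
    intro j hj
    simp only [Finset.mem_Icc] at hj
    have hexp : (1 - x) ^ (n - j) = ∑ i ∈ Finset.range (n - j + 1),
        (-1 : ℝ) ^ i * ((n - j).choose i : ℝ) * x ^ i := by
      have h := add_pow (-x) 1 (n - j)
      simp only [one_pow, mul_one, neg_add_eq_sub] at h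
      rw [h]
      apply Finset.sum_congr rfl
      intro i _
      rw [neg_pow]
      ring
    rw [hexp, Finset.mul_sum, ← Finset.Ico_add_one_right_eq_Icc j n, Finset.sum_Ico_eq_sum_range]
    apply Finset.sum_congr (by congr 1; omega)
    intro i hi
    simp only [Finset.mem_range] at hi
    have h5 : j + i - j = i := by omega
    rw [h5]
    ring
  rw [Finset.sum_congr rfl step1]
  refine Eq.symm ?_
  calc ∑ j ∈ Finset.Icc k n, ∑ m ∈ Finset.Icc j n,
          (-1 : ℝ) ^ (m - j) * ((n.choose j : ℝ) * ((n - j).choose (m - j) : ℝ)) * x ^ m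
      = ∑ m ∈ Finset.Icc k n, ∑ j ∈ Finset.Icc k m,
          (-1 : ℝ) ^ (m - j) * ((n.choose j : ℝ) * ((n - j).choose (m - j) : ℝ)) * x ^ m := by
        simp only [← Finset.Ico_add_one_right_eq_Icc]
        rw [Finset.sum_Ico_Ico_comm]
    _ = ∑ m ∈ Finset.Icc k n,
          (-1 : ℝ) ^ (m - k) * (n.choose m : ℝ) * ((m - 1).choose (k - 1) : ℝ) * x ^ m := by
        apply Finset.sum_congr rfl
        intro m hm
        simp only [Finset.mem_Icc] at hm
        have hcm : ∀ j ∈ Finset.Icc k m,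
            (-1 : ℝ) ^ (m - j) * ((n.choose j : ℝ) * ((n - j).choose (m - j) : ℝ)) * x ^ m
              = (n.choose m : ℝ) * x ^ m * ((-1 : ℝ) ^ (m - j) * (m.choose j : ℝ)) := by
          intro j hj
          simp only [Finset.mem_Icc] at hj
          have h6 := Nat.choose_mul (n := n) (k := m) (s := j) hj.2
          have hcast : (n.choose m : ℝ) * (m.choose j : ℝ)
              = (n.choose j : ℝ) * ((n - j).choose (m - j) : ℝ) := by
            exact_mod_cast congrArg (fun t : ℕ => (t : ℝ)) h6
          rw [← hcast]
          ring
        rw [Finset.sum_congr rfl hcm, ← Finset.mul_sum, key m k hk hm.1]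
        ring
end

section
/- For integers n ≥ k ≥ 2 and real x with 0 ≤ x ≤ 1, the sum ∑_{j=0}^{k-1} C(n, j) * (1-x)^{n-j} * x^j is at least 1 - ((n-1)x)^2. -/
theorem local_factor_lower_bound (n k : ℕ) (hk : 2 ≤ k) (hkn : k ≤ n) (x : ℝ)
    (hx0 : 0 ≤ x) (hx1 : x ≤ 1) :
    ∑ j ∈ Finset.range k, (n.choose j : ℝ) * (1 - x) ^ (n - j) * x ^ j ≥
      1 - (((n : ℝ) - 1) * x) ^ 2 := by
  obtain ⟨m, rfl⟩ : ∃ m, n = m + 1 := ⟨n - 1, by omega⟩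
  have h1x : (0:ℝ) ≤ 1 - x := by linarith
  have hsub : Finset.range 2 ⊆ Finset.range k := Finset.range_subset_range.2 hk
  have hmono : ∑ j ∈ Finset.range 2, ((m+1).choose j : ℝ) * (1 - x) ^ (m+1 - j) * x ^ j ≤
      ∑ j ∈ Finset.range k, ((m+1).choose j : ℝ) * (1 - x) ^ (m+1 - j) * x ^ j := by
    apply Finset.sum_le_sum_of_subset_of_nonneg hsub
    intro j _ _
    have : (0:ℝ) ≤ ((m+1).choose j : ℝ) := Nat.cast_nonneg _
    exact mul_nonneg (mul_nonneg this (pow_nonneg h1x _)) (pow_nonneg hx0 _)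
  have hb : 1 - (m:ℝ) * x ≤ (1 - x) ^ m := by
    have := one_add_mul_le_pow (a := -x) (by linarith) m
    calc 1 - (m:ℝ) * x = 1 + m * (-x) := by ring
    _ ≤ (1 + (-x)) ^ m := this
    _ = (1 - x) ^ m := by ring_nf
  have hsum2 : ∑ j ∈ Finset.range 2, ((m+1).choose j : ℝ) * (1 - x) ^ (m+1 - j) * x ^ j
      = (1 - x) ^ m * (1 + m * x) := by
    simp [Finset.sum_range_succ, pow_succ]
    ring
  have hfin : (1 - x) ^ m * (1 + m * x) ≥ 1 - ((m:ℝ) * x) ^ 2 := by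
    have hm0 : (0:ℝ) ≤ (m:ℝ) * x := mul_nonneg (Nat.cast_nonneg _) hx0
    nlinarith [mul_le_mul_of_nonneg_right hb (by linarith : (0:ℝ) ≤ 1 + m * x)]
  have : (((m+1:ℕ):ℝ) - 1) = (m:ℝ) := by push_cast; ring
  rw [this]
  calc 1 - ((m:ℝ) * x) ^ 2 ≤ (1 - x) ^ m * (1 + m * x) := hfin
  _ = _ := hsum2.symm
  _ ≤ _ := hmono
end

section
/- Fix integers n ≥ k ≥ 2, r ≥ 1, and a prime p. Define ψ(a_1,...,a_n) = ∑_{d_i e_i = a_i} ρ(d_1,...,d_n) μ(e_1)⋯μ(e_n), where ρ is the k-wise relatively-r-prime indicator and μ is the Möbius function. If some exponent ν_i satisfies ν_i ≥ r+1 or 1 ≤ ν_i ≤ r-1, then ψ(p^{ν_1}, ..., p^{ν_n}) = 0. -/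
/-- `a_1, ..., a_n` are `k`-wise relatively `r`-prime: for every `k`-element set of
indices, no prime `p` satisfies `p ^ r ∣ a i` for all chosen `i`. -/
def KWiseRelRPrime (n k r : ℕ) (a : Fin n → ℕ) : Prop :=
  ∀ s : Finset (Fin n), s.card = k → ¬ ∃ p : ℕ, p.Prime ∧ ∀ i ∈ s, p ^ r ∣ a i

open Classical in
/-- Indicator of `k`-wise relative `r`-primality. -/
noncomputable def rho (n k r : ℕ) (a : Fin n → ℕ) : ℤ :=
  if KWiseRelRPrime n k r a then 1 else 0

open scoped ArithmeticFunction in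
/-- Möbius transform `ψ(a) = ∑_{d_i e_i = a_i} ρ(d) μ(e_1) ⋯ μ(e_n)`. -/
noncomputable def psi (n k r : ℕ) (a : Fin n → ℕ) : ℤ :=
  ∑ d ∈ Fintype.piFinset (fun i => (a i).divisors),
    rho n k r d * ∏ i, ArithmeticFunction.moebius (a i / d i)

open scoped ArithmeticFunction
open scoped ArithmeticFunction.Moebius

lemma squarefree_pow_le_one {p t : ℕ} (hp : p.Prime) (h : Squarefree (p ^ t)) : t ≤ 1 := by
  by_contra hlt
  push_neg at hlt
  have hdvd : p * p ∣ p ^ t := by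
    have : p ^ 2 ∣ p ^ t := pow_dvd_pow p (by omega)
    simpa [sq] using this
  exact hp.one_lt.ne' (Nat.isUnit_iff.mp (h p hdvd))

theorem psi_eq_zero_of_bad_exponent (n k r : ℕ) (hk : 2 ≤ k) (hkn : k ≤ n) (hr : 1 ≤ r)
    (p : ℕ) (hp : p.Prime) (ν : Fin n → ℕ)
    (h : ∃ i, r + 1 ≤ ν i ∨ (1 ≤ ν i ∧ ν i ≤ r - 1)) :
    psi n k r (fun i => p ^ ν i) = 0 := by
  classical
  obtain ⟨i₀, hbad⟩ := h
  set ν₀ := ν i₀ with hν₀def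
  have hν1 : 1 ≤ ν₀ := by omega
  have hppos : 0 < p := hp.pos
  have hne : p ^ (ν₀ - 1) ≠ p ^ ν₀ := by
    intro hEq
    have := Nat.pow_right_injective hp.two_le hEq
    omega
  -- key divisibility characterization
  have key : ∀ q : ℕ, q.Prime → ∀ j : ℕ, (j = ν₀ ∨ j = ν₀ - 1) →
      (q ^ r ∣ p ^ j ↔ (q = p ∧ r ≤ ν₀ - 1)) := by
    intro q hq j hj
    constructor
    · intro hd
      have hq1 : q ∣ p ^ j := dvd_trans (dvd_pow_self q (by omega)) hd
      have hqp : q = p := (Nat.prime_dvd_prime_iff_eq hq hp).mp (hq.dvd_of_dvd_pow hq1)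
      subst hqp
      have hrj : r ≤ j := (Nat.pow_dvd_pow_iff_le_right hp.one_lt).mp hd
      exact ⟨rfl, by omega⟩
    · rintro ⟨rfl, hr'⟩
      exact pow_dvd_pow q (by omega)
  -- invariance of rho under changing coordinate i₀ between p^ν₀ and p^(ν₀-1)
  have kw_iff : ∀ (d : Fin n → ℕ) (b : ℕ),
      (d i₀ = p ^ ν₀ ∨ d i₀ = p ^ (ν₀ - 1)) → (b = p ^ ν₀ ∨ b = p ^ (ν₀ - 1)) →
      (KWiseRelRPrime n k r (Function.update d i₀ b) ↔ KWiseRelRPrime n k r d) := by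
    intro d b hd hb
    have hdvd : ∀ q : ℕ, q.Prime → ∀ i, (q ^ r ∣ Function.update d i₀ b i ↔ q ^ r ∣ d i) := by
      intro q hq i
      by_cases hi : i = i₀
      · rw [hi, Function.update_self]
        have h1 : q ^ r ∣ b ↔ (q = p ∧ r ≤ ν₀ - 1) := by
          rcases hb with rfl | rfl
          · exact key q hq ν₀ (Or.inl rfl)
          · exact key q hq (ν₀ - 1) (Or.inr rfl)
        have h2 : q ^ r ∣ d i₀ ↔ (q = p ∧ r ≤ ν₀ - 1) := by
          rcases hd with hd' | hd' <;> rw [hd']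
          · exact key q hq ν₀ (Or.inl rfl)
          · exact key q hq (ν₀ - 1) (Or.inr rfl)
        rw [h1, h2]
      · rw [Function.update_of_ne hi]
    refine forall_congr' fun s => imp_congr Iff.rfl (not_congr (exists_congr fun q =>
      and_congr_right fun hq => forall₂_congr fun i _ => hdvd q hq i))
  have rho_inv : ∀ (d : Fin n → ℕ) (b : ℕ),
      (d i₀ = p ^ ν₀ ∨ d i₀ = p ^ (ν₀ - 1)) → (b = p ^ ν₀ ∨ b = p ^ (ν₀ - 1)) →
      rho n k r (Function.update d i₀ b) = rho n k r d := by
    intro d b hd hb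
    unfold rho
    exact if_congr (kw_iff d b hd hb) rfl rfl
  -- the flip function
  set flip : ℕ → ℕ := fun x => if x = p ^ ν₀ then p ^ (ν₀ - 1) else p ^ ν₀ with hflip
  have hflip1 : flip (p ^ ν₀) = p ^ (ν₀ - 1) := by simp [hflip]
  have hflip2 : flip (p ^ (ν₀ - 1)) = p ^ ν₀ := by simp [hflip, hne]
  -- term function
  set f : (Fin n → ℕ) → ℤ :=
    fun d => rho n k r d * ∏ i, (μ (p ^ ν i / d i) : ℤ) with hf
  -- moebius values at the two key points
  have hq1 : (μ (p ^ ν₀ / p ^ ν₀) : ℤ) = 1 := by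
    rw [Nat.div_self (pow_pos hppos ν₀)]
    exact ArithmeticFunction.moebius_apply_one
  have hq2 : (μ (p ^ ν₀ / p ^ (ν₀ - 1)) : ℤ) = -1 := by
    rw [Nat.pow_div (by omega) hppos]
    have hone : ν₀ - (ν₀ - 1) = 1 := by omega
    rw [hone, pow_one]
    exact ArithmeticFunction.moebius_apply_prime hp
  -- key term relation
  have hterm : ∀ d : Fin n → ℕ, (d i₀ = p ^ ν₀ ∨ d i₀ = p ^ (ν₀ - 1)) →
      f (Function.update d i₀ (flip (d i₀))) = - f d := by
    intro d hd
    have hb : flip (d i₀) = p ^ ν₀ ∨ flip (d i₀) = p ^ (ν₀ - 1) := by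
      rcases hd with hd' | hd' <;> rw [hd']
      · exact Or.inr hflip1
      · exact Or.inl hflip2
    have hrho := rho_inv d (flip (d i₀)) hd hb
    have hprod : ∏ i, (μ (p ^ ν i / Function.update d i₀ (flip (d i₀)) i) : ℤ) =
        - ∏ i, (μ (p ^ ν i / d i) : ℤ) := by
      rw [← Finset.mul_prod_erase Finset.univ _ (Finset.mem_univ i₀),
          ← Finset.mul_prod_erase Finset.univ (fun i => (μ (p ^ ν i / d i) : ℤ))
            (Finset.mem_univ i₀)]
      have herase : ∏ i ∈ Finset.univ.erase i₀,
          (μ (p ^ ν i / Function.update d i₀ (flip (d i₀)) i) : ℤ) =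
          ∏ i ∈ Finset.univ.erase i₀, (μ (p ^ ν i / d i) : ℤ) := by
        refine Finset.prod_congr rfl fun i hi => ?_
        rw [Function.update_of_ne (Finset.mem_erase.mp hi).1]
      rw [herase, Function.update_self]
      have hi₀ : (μ ((p : ℕ) ^ ν i₀ / flip (d i₀)) : ℤ) = - (μ (p ^ ν i₀ / d i₀) : ℤ) := by
        rcases hd with hd' | hd' <;> rw [hd', ← hν₀def]
        · rw [hflip1, hq1, hq2]
        · rw [hflip2, hq1, hq2]; norm_num
      rw [hi₀]
      ring
    rw [hf]
    simp only
    rw [hrho, hprod]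
    ring
  -- now the main sum
  have hpsi : psi n k r (fun i => p ^ ν i) =
      ∑ d ∈ Fintype.piFinset (fun i => ((p : ℕ) ^ ν i).divisors), f d := rfl
  rw [hpsi, ← Finset.sum_filter_ne_zero]
  set S := (Fintype.piFinset (fun i => ((p : ℕ) ^ ν i).divisors)).filter (fun d => f d ≠ 0)
    with hS
  -- on S, the i₀ coordinate is p^ν₀ or p^(ν₀-1)
  have hcoord : ∀ d ∈ S, d i₀ = p ^ ν₀ ∨ d i₀ = p ^ (ν₀ - 1) := by
    intro d hd
    rw [hS, Finset.mem_filter] at hd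
    obtain ⟨hmem, hfne⟩ := hd
    have hdvd : d i₀ ∣ p ^ ν₀ := by
      have := Fintype.mem_piFinset.mp hmem i₀
      exact (Nat.mem_divisors.mp this).1
    obtain ⟨a, haν, hda⟩ := (Nat.dvd_prime_pow hp).mp hdvd
    have hμne : (μ (p ^ ν i₀ / d i₀) : ℤ) ≠ 0 := by
      intro h0
      apply hfne
      rw [hf]
      simp only
      rw [Finset.prod_eq_zero (Finset.mem_univ i₀) h0, mul_zero]
    rw [hda, ← hν₀def, Nat.pow_div haν hppos] at hμne
    have hsf : Squarefree (p ^ (ν₀ - a)) :=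
      ArithmeticFunction.moebius_ne_zero_iff_squarefree.mp hμne
    have h1 := squarefree_pow_le_one hp hsf
    have h2 : a = ν₀ ∨ a = ν₀ - 1 := by omega
    rcases h2 with rfl | rfl
    · exact Or.inl hda
    · exact Or.inr hda
  have G_mem : ∀ d ∈ S, Function.update d i₀ (flip (d i₀)) ∈ S := by
    intro d hd
    have hc := hcoord d hd
    rw [hS, Finset.mem_filter] at hd ⊢
    obtain ⟨hmem, hfne⟩ := hd
    constructor
    · rw [Fintype.mem_piFinset]
      intro i
      by_cases hi : i = i₀
      · rw [hi, Function.update_self, Nat.mem_divisors]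
        have hb : flip (d i₀) = p ^ ν₀ ∨ flip (d i₀) = p ^ (ν₀ - 1) := by
          rcases hc with hd' | hd' <;> rw [hd']
          · exact Or.inr hflip1
          · exact Or.inl hflip2
        refine ⟨?_, pow_ne_zero _ hppos.ne'⟩
        rcases hb with hb | hb <;> rw [hb] <;> exact pow_dvd_pow p (by omega)
      · rw [Function.update_of_ne hi]
        exact Fintype.mem_piFinset.mp hmem i
    · rw [hterm d hc]
      simpa using hfne
  have G_add : ∀ d ∈ S, f d + f (Function.update d i₀ (flip (d i₀))) = 0 := by
    intro d hd
    rw [hterm d (hcoord d hd)]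
    ring
  have G_ne : ∀ d ∈ S, Function.update d i₀ (flip (d i₀)) ≠ d := by
    intro d hd hEq
    have h1 := congrFun hEq i₀
    rw [Function.update_self] at h1
    rcases hcoord d hd with hd' | hd' <;> rw [hd'] at h1
    · rw [hflip1] at h1; exact hne h1
    · rw [hflip2] at h1; exact hne h1.symm
  have G_inv : ∀ d ∈ S, Function.update (Function.update d i₀ (flip (d i₀))) i₀
      (flip (Function.update d i₀ (flip (d i₀)) i₀)) = d := by
    intro d hd
    funext i
    by_cases hi : i = i₀
    · rw [hi, Function.update_self, Function.update_self]
      rcases hcoord d hd with hd' | hd' <;> rw [hd']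
      · rw [hflip1, hflip2]
      · rw [hflip2, hflip1]
    · rw [Function.update_of_ne hi, Function.update_of_ne hi]
  exact Finset.sum_involution (fun d _ => Function.update d i₀ (flip (d i₀)))
    G_add (fun d hd _ => G_ne d hd) (fun d hd => G_mem d hd) (fun d hd => G_inv d hd)
end

section
/- Fix integers n ≥ k ≥ 2, r ≥ 1, a prime p, and suppose every exponent ν_i ∈ {0, r}, with exactly j indices having ν_i = r. Then ψ(p^{ν_1}, ..., p^{ν_n}) equals 1 if j = 0, equals 0 if 1 ≤ j ≤ k-1, and equals (-1)^{j-k+1} * C(j-1, k-1) if j ≥ k. -/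
lemma partial_alt_sum (j m : ℕ) (hj : 1 ≤ j) :
    ∑ t ∈ Finset.range (m+1), (-1:ℤ)^t * (j.choose t) = (-1)^m * ((j-1).choose m) := by
  induction m with
  | zero => simp
  | succ m ih =>
    rw [Finset.sum_range_succ, ih]
    obtain ⟨j', rfl⟩ : ∃ j', j = j' + 1 := ⟨j - 1, by omega⟩
    simp only [Nat.add_sub_cancel]
    rw [Nat.choose_succ_succ]
    push_cast
    ring

lemma neg_one_pow_sub (j t : ℕ) (h : t ≤ j) : ((-1:ℤ))^(j-t) = (-1)^j * (-1)^t := by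
  calc ((-1:ℤ))^(j-t) = (-1)^(j-t) * ((-1)^2)^t := by norm_num
    _ = (-1)^(j-t+2*t) := by rw [← pow_mul, ← pow_add]
    _ = (-1)^(j+t) := by rw [show j - t + 2*t = j + t by omega]
    _ = (-1)^j * (-1)^t := by rw [pow_add]

theorem psi_prime_powers (n k r : ℕ) (hk : 2 ≤ k) (hkn : k ≤ n) (hr : 1 ≤ r)
    (p : ℕ) (hp : p.Prime) (ν : Fin n → ℕ) (hν : ∀ i, ν i = 0 ∨ ν i = r)
    (j : ℕ) (hj : j = (Finset.univ.filter fun i => ν i = r).card) :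
    psi n k r (fun i => p ^ ν i) =
      if j = 0 then 1
      else if j ≤ k - 1 then 0
      else (-1 : ℤ) ^ (j - k + 1) * ((j - 1).choose (k - 1) : ℤ) := by
  classical
  have hp1 : 1 < p := hp.one_lt
  set J : Finset (Fin n) := Finset.univ.filter (fun i => ν i = r) with hJ
  set F : Finset (Fin n) → (Fin n → ℕ) :=
    fun S i => if i ∈ S then p ^ ν i else p ^ (ν i - 1) with hF
  set f : (Fin n → ℕ) → ℤ :=
    fun d => rho n k r d * ∏ i, ArithmeticFunction.moebius (p ^ ν i / d i) with hf
  have hpinj : ∀ a b : ℕ, p ^ a = p ^ b → a = b :=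
    fun a b h => Nat.pow_right_injective hp.two_le h
  -- membership of the image in the index finset
  have h1 : ∀ S ∈ J.powerset, F S ∈ Fintype.piFinset (fun i => (p ^ ν i).divisors) := by
    intro S hS
    rw [Fintype.mem_piFinset]
    intro i
    rw [Nat.mem_divisors]
    refine ⟨?_, pow_ne_zero _ (by omega)⟩
    by_cases h : i ∈ S <;> simp only [hF, h, if_true, if_false]
    · exact dvd_refl _
    · exact pow_dvd_pow p (Nat.sub_le _ _)
  -- key divisibility characterization
  have hdvd : ∀ (q : ℕ), q.Prime → ∀ (S : Finset (Fin n)), S ⊆ J → ∀ i,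
      (q ^ r ∣ F S i ↔ (q = p ∧ i ∈ S)) := by
    intro q hq S hSJ i
    constructor
    · intro h
      by_cases hiS : i ∈ S
      · refine ⟨?_, hiS⟩
        have hir : ν i = r := by have := hSJ hiS; simp [hJ] at this; exact this
        simp only [hF, hiS, if_true, hir] at h
        have hqp : q ∣ p ^ r := dvd_trans (dvd_pow_self q (by omega)) h
        exact (Nat.prime_dvd_prime_iff_eq hq hp).mp (hq.dvd_of_dvd_pow hqp)
      · exfalso
        simp only [hF, hiS, if_false] at h
        rcases hν i with h0 | h0
        · rw [h0, pow_zero] at h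
          have : q ∣ 1 := dvd_trans (dvd_pow_self q (by omega)) h
          exact hq.one_lt.ne' (Nat.dvd_one.mp this)
        · rw [h0] at h
          have hqp : q ∣ p ^ (r - 1) := dvd_trans (dvd_pow_self q (by omega)) h
          by_cases hr1 : r - 1 = 0
          · rw [hr1] at hqp; simp at hqp
            exact hq.one_lt.ne' hqp
          · have hqep : q = p :=
              (Nat.prime_dvd_prime_iff_eq hq hp).mp (hq.dvd_of_dvd_pow hqp)
            rw [hqep] at h
            have := (Nat.pow_dvd_pow_iff_le_right hp1).mp h
            omega
    · rintro ⟨rfl, hiS⟩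
      have hir : ν i = r := by have := hSJ hiS; simp [hJ] at this; exact this
      simp only [hF, hiS, if_true, hir]
      exact dvd_refl _
  -- rho at F S
  have hrho : ∀ S ∈ J.powerset, rho n k r (F S) = if S.card ≤ k - 1 then 1 else 0 := by
    intro S hS
    rw [Finset.mem_powerset] at hS
    by_cases hc : S.card ≤ k - 1
    · rw [if_pos hc]
      have : KWiseRelRPrime n k r (F S) := by
        intro s hs ⟨q, hq, hall⟩
        have hsub : s ⊆ S := fun i hi => ((hdvd q hq S hS i).mp (hall i hi)).2
        have := Finset.card_le_card hsub
        omega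
      simp [rho, this]
    · rw [if_neg hc]
      have : ¬ KWiseRelRPrime n k r (F S) := by
        intro hK
        obtain ⟨s, hsub, hcard⟩ := Finset.exists_subset_card_eq (s := S) (n := k) (by omega)
        exact hK s hcard ⟨p, hp, fun i hi => (hdvd p hp S hS i).mpr ⟨rfl, hsub hi⟩⟩
      simp [rho, this]
  -- moebius product at F S
  have hmu : ∀ S ∈ J.powerset,
      (∏ i, (ArithmeticFunction.moebius (p ^ ν i / F S i) : ℤ)) = (-1) ^ (J.card - S.card) := by
    intro S hS
    rw [Finset.mem_powerset] at hS
    have key : ∀ i : Fin n, (ArithmeticFunction.moebius (p ^ ν i / F S i) : ℤ) =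
        if i ∈ J \ S then -1 else 1 := by
      intro i
      by_cases hiS : i ∈ S
      · have hiJ := hS hiS
        simp only [hF, hiS, if_true, Finset.mem_sdiff, hiS, and_false, if_false]
        rw [Nat.div_self (by positivity)]
        simp
      · by_cases hiJ : i ∈ J
        · have hir : ν i = r := by simp [hJ] at hiJ; exact hiJ
          simp only [hF, hiS, if_false, Finset.mem_sdiff, hiJ, hiS, not_false_iff, and_true,
            if_true, hir]
          rw [Nat.pow_div (Nat.sub_le _ _) (by omega)]
          have : r - (r - 1) = 1 := by omega
          rw [this, pow_one]
          exact ArithmeticFunction.moebius_apply_prime hp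
        · have hir : ν i = 0 := by
            rcases hν i with h0 | h0
            · exact h0
            · exfalso; exact hiJ (by simp [hJ, h0])
          simp only [hF, hiS, if_false, Finset.mem_sdiff, hiJ, false_and, if_false, hir]
          norm_num
    rw [Finset.prod_congr rfl (fun i _ => key i), Finset.prod_ite_mem,
      Finset.univ_inter, Finset.prod_const, Finset.card_sdiff_of_subset hS]
  -- injectivity of F
  have hinj : Set.InjOn F J.powerset := by
    intro S hS S' hS' hFF
    rw [Finset.coe_powerset, Set.mem_preimage, Set.mem_powerset_iff, Finset.coe_subset] at hS hS'
    have key : ∀ (A B : Finset (Fin n)), A ⊆ J → B ⊆ J → F A = F B → A ⊆ B := by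
      intro A B hA hB hAB i hiA
      have hir : ν i = r := by have := hA hiA; simp [hJ] at this; exact this
      by_contra hiB
      have := congrFun hAB i
      simp only [hF, hiA, hiB, if_true, if_false, hir] at this
      have := hpinj _ _ this
      omega
    exact Finset.Subset.antisymm (key _ _ hS hS' hFF) (key _ _ hS' hS hFF.symm)
  -- rewrite psi as sum over powerset
  have step1 : psi n k r (fun i => p ^ ν i) = ∑ S ∈ J.powerset, f (F S) := by
    rw [psi]
    rw [← Finset.sum_image (fun S hS S' hS' h => hinj hS hS' h)]
    symm
    apply Finset.sum_subset
    · intro d hd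
      rw [Finset.mem_image] at hd
      obtain ⟨S, hS, rfl⟩ := hd
      exact h1 S hS
    · intro d hd hdim
      rw [Fintype.mem_piFinset] at hd
      by_contra hne
      have hprodne : (∏ i, (ArithmeticFunction.moebius (p ^ ν i / d i) : ℤ)) ≠ 0 := by
        intro h0
        apply hne
        simp only [hf]
        rw [h0, mul_zero]
      -- each d i is a power of p with exponent ≥ ν i - 1
      have hdi : ∀ i, d i = p ^ ν i ∨ d i = p ^ (ν i - 1) := by
        intro i
        have hdvdi : d i ∣ p ^ ν i := (Nat.mem_divisors.mp (hd i)).1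
        obtain ⟨m, hm, hm2⟩ := (Nat.dvd_prime_pow hp).mp hdvdi
        rw [hm2]
        have hmune : (ArithmeticFunction.moebius (p ^ ν i / p ^ m) : ℤ) ≠ 0 := by
          intro h0
          exact hprodne (Finset.prod_eq_zero (Finset.mem_univ i) (by rw [hm2]; exact h0))
        rw [Nat.pow_div hm (by omega)] at hmune
        have hsf := ArithmeticFunction.moebius_ne_zero_iff_squarefree.mp hmune
        have : ν i - m ≤ 1 := by
          by_contra hgt
          have h2 : p * p ∣ p ^ (ν i - m) := by
            have : p ^ 2 ∣ p ^ (ν i - m) := pow_dvd_pow p (by omega)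
            rwa [pow_two] at this
          exact hp.one_lt.ne' (Nat.isUnit_iff.mp (hsf p h2))
        rcases Nat.lt_or_ge m (ν i) with h | h
        · right; congr 1; omega
        · left; congr 1; omega
      apply hdim
      rw [Finset.mem_image]
      refine ⟨J.filter (fun i => d i = p ^ r), Finset.mem_powerset.mpr (Finset.filter_subset _ _), ?_⟩
      funext i
      by_cases hiJ : i ∈ J
      · have hir : ν i = r := by simp [hJ] at hiJ; exact hiJ
        by_cases hdir : d i = p ^ r
        · simp [hF, hiJ, hdir, hir]
        · have : i ∉ J.filter (fun i => d i = p ^ r) := by simp [hdir]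
          simp only [hF, this, if_false, hir]
          rcases hdi i with h | h
          · exfalso; rw [hir] at h; exact hdir h
          · rw [hir] at h; exact h.symm
      · have hir : ν i = 0 := by
          rcases hν i with h0 | h0
          · exact h0
          · exfalso; exact hiJ (by simp [hJ, h0])
        have hni : i ∉ J.filter (fun i => d i = p ^ r) := by
          intro h; exact hiJ (Finset.mem_of_mem_filter i h)
        simp only [hF, hni, if_false, hir]
        rcases hdi i with h | h <;> rw [hir] at h <;> simpa using h.symm
  -- evaluate the sum
  rw [step1]
  have step2 : ∑ S ∈ J.powerset, f (F S) =
      ∑ S ∈ J.powerset, (if S.card ≤ k - 1 then (1:ℤ) else 0) * (-1) ^ (J.card - S.card) := by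
    apply Finset.sum_congr rfl
    intro S hS
    simp only [hf]
    rw [hrho S hS, hmu S hS]
  rw [step2, Finset.sum_powerset]
  have step3 : ∀ t ∈ Finset.range (J.card + 1),
      (∑ S ∈ Finset.powersetCard t J, (if S.card ≤ k - 1 then (1:ℤ) else 0) * (-1) ^ (J.card - S.card))
      = (J.card.choose t : ℤ) * ((if t ≤ k - 1 then (1:ℤ) else 0) * (-1) ^ (J.card - t)) := by
    intro t ht
    rw [Finset.sum_congr rfl (fun S hS => by
      rw [(Finset.mem_powersetCard.mp hS).2]), Finset.sum_const, Finset.card_powersetCard,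
      nsmul_eq_mul]
  rw [Finset.sum_congr rfl step3]
  have hjc : j = J.card := hj
  rw [← hjc]
  by_cases hj0 : j = 0
  · subst hj0
    simp
  · rw [if_neg hj0]
    by_cases hjk : j ≤ k - 1
    · rw [if_pos hjk]
      have : ∀ t ∈ Finset.range (j + 1),
          (j.choose t : ℤ) * ((if t ≤ k - 1 then (1:ℤ) else 0) * (-1) ^ (j - t))
          = (-1) ^ j * ((-1) ^ t * (j.choose t : ℤ)) := by
        intro t ht
        rw [Finset.mem_range] at ht
        rw [if_pos (by omega), one_mul]
        rw [neg_one_pow_sub j t (by omega)]; ring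
      rw [Finset.sum_congr rfl this, ← Finset.mul_sum, Int.alternating_sum_range_choose,
        if_neg hj0, mul_zero]
    · rw [if_neg hjk]
      have hjk' : k ≤ j := by omega
      -- restrict sum to range k
      rw [← Finset.sum_subset (Finset.range_subset_range.mpr (show k ≤ j + 1 by omega))
        (fun t ht htn => by
          rw [Finset.mem_range] at htn
          rw [if_neg (by push_neg at htn ⊢; omega), zero_mul, mul_zero])]
      have : ∀ t ∈ Finset.range k,
          (j.choose t : ℤ) * ((if t ≤ k - 1 then (1:ℤ) else 0) * (-1) ^ (j - t))
          = (-1) ^ j * ((-1) ^ t * (j.choose t : ℤ)) := by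
        intro t ht
        rw [Finset.mem_range] at ht
        rw [if_pos (by omega), one_mul]
        rw [neg_one_pow_sub j t (by omega)]; ring
      rw [Finset.sum_congr rfl this, ← Finset.mul_sum]
      have hk1 : k = (k - 1) + 1 := by omega
      rw [hk1, partial_alt_sum j (k-1) (by omega)]
      rw [← mul_assoc, ← pow_add]
      congr 1
      · have h2 : j + (k - 1) = (j - (k - 1 + 1) + 1) + 2 * (k - 1) := by omega
        rw [h2, pow_add, pow_mul]
        norm_num
end

section
/- Let q ≥ 2 be an integer (playing the role of the norm N(p^r)) and let n ≥ k ≥ 2. Then 1 - ∑_{j=k}^{n} (-1)^{j-k} * C(n,j) * C(j-1,k-1) * q^{-j} = ∑_{j=0}^{k-1} C(n,j) * (1 - 1/q)^{n-j} * q^{-j}. -/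
open Finset

private lemma alt_sum_aux (k d : ℕ) :
    ∑ i ∈ Finset.range (d + 1), (-1 : ℝ) ^ i * ((k + 1 + d).choose (k + 1 + i) : ℝ) =
      ((k + d).choose k : ℝ) := by
  induction d with
  | zero => simp
  | succ d ih =>
    have pascal : ∀ i : ℕ, (k + 1 + (d + 1)).choose (k + 1 + i) =
        (k + 1 + d).choose (k + i) + (k + 1 + d).choose (k + 1 + i) := by
      intro i
      have h1 : k + 1 + (d + 1) = (k + 1 + d) + 1 := by omega
      have h2 : k + 1 + i = (k + i) + 1 := by omega
      rw [h1, h2, Nat.choose_succ_succ]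
    have step1 : ∑ i ∈ Finset.range (d + 1 + 1),
        (-1 : ℝ) ^ i * ((k + 1 + (d + 1)).choose (k + 1 + i) : ℝ)
        = (∑ i ∈ Finset.range (d + 2), (-1 : ℝ) ^ i * ((k + 1 + d).choose (k + i) : ℝ))
          + ∑ i ∈ Finset.range (d + 2), (-1 : ℝ) ^ i * ((k + 1 + d).choose (k + 1 + i) : ℝ) := by
      rw [← Finset.sum_add_distrib]
      apply Finset.sum_congr rfl
      intro i _
      rw [pascal i]
      push_cast
      ring
    have stepB : ∑ i ∈ Finset.range (d + 2), (-1 : ℝ) ^ i * ((k + 1 + d).choose (k + 1 + i) : ℝ)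
        = ((k + d).choose k : ℝ) := by
      rw [Finset.sum_range_succ]
      have hz : (k + 1 + d).choose (k + 1 + (d + 1)) = 0 :=
        Nat.choose_eq_zero_of_lt (by omega)
      rw [hz, ih]
      simp
    have stepA : ∑ i ∈ Finset.range (d + 2), (-1 : ℝ) ^ i * ((k + 1 + d).choose (k + i) : ℝ)
        = ((k + 1 + d).choose k : ℝ) - ((k + d).choose k : ℝ) := by
      rw [Finset.sum_range_succ']
      have h : ∀ i : ℕ, (-1 : ℝ) ^ (i + 1) * ((k + 1 + d).choose (k + (i + 1)) : ℝ)
          = -((-1 : ℝ) ^ i * ((k + 1 + d).choose (k + 1 + i) : ℝ)) := by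
        intro i
        have : k + (i + 1) = k + 1 + i := by omega
        rw [this]
        ring
      rw [Finset.sum_congr rfl fun i _ => h i, Finset.sum_neg_distrib]
      rw [ih]
      simp
      ring
    rw [step1, stepA, stepB]
    have : k + 1 + d = k + (d + 1) := by omega
    rw [this]
    ring

private lemma alt_icc (k m : ℕ) (hk : 1 ≤ k) (hkm : k ≤ m) :
    ∑ j ∈ Finset.Icc k m, (-1 : ℝ) ^ (j - k) * (m.choose j : ℝ) =
      ((m - 1).choose (k - 1) : ℝ) := by
  obtain ⟨k', rfl⟩ : ∃ k', k = k' + 1 := ⟨k - 1, by omega⟩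
  obtain ⟨d, rfl⟩ : ∃ d, m = k' + 1 + d := ⟨m - (k' + 1), by omega⟩
  rw [← Finset.Ico_add_one_right_eq_Icc, Finset.sum_Ico_eq_sum_range]
  have hN : k' + 1 + d + 1 - (k' + 1) = d + 1 := by omega
  rw [hN]
  have hsimp : ∀ i : ℕ, (-1 : ℝ) ^ (k' + 1 + i - (k' + 1)) * ((k' + 1 + d).choose (k' + 1 + i) : ℝ)
      = (-1 : ℝ) ^ i * ((k' + 1 + d).choose (k' + 1 + i) : ℝ) := by
    intro i
    have : k' + 1 + i - (k' + 1) = i := by omega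
    rw [this]
  rw [Finset.sum_congr rfl fun i _ => hsimp i, alt_sum_aux]
  have h1 : k' + 1 + d - 1 = k' + d := by omega
  have h2 : k' + 1 - 1 = k' := by omega
  rw [h1, h2]

private lemma key_identity (x : ℝ) (n k : ℕ) (hk : 1 ≤ k) (hkn : k ≤ n) :
    ∑ j ∈ Finset.Icc k n, (n.choose j : ℝ) * x ^ j * (1 - x) ^ (n - j) =
      ∑ j ∈ Finset.Icc k n,
        (-1 : ℝ) ^ (j - k) * (n.choose j : ℝ) * ((j - 1).choose (k - 1) : ℝ) * x ^ j := by
  have expand : ∀ j ∈ Finset.Icc k n, (n.choose j : ℝ) * x ^ j * (1 - x) ^ (n - j)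
      = ∑ m ∈ Finset.Icc j n,
          (-1 : ℝ) ^ (m - j) * (n.choose j : ℝ) * ((n - j).choose (m - j) : ℝ) * x ^ m := by
    intro j hj
    have hjn : j ≤ n := (Finset.mem_Icc.mp hj).2
    rw [← Finset.Ico_add_one_right_eq_Icc, Finset.sum_Ico_eq_sum_range]
    have hN : n + 1 - j = (n - j) + 1 := by omega
    rw [hN]
    have hpow : (1 - x) ^ (n - j) = ∑ i ∈ Finset.range ((n - j) + 1),
        (-x) ^ i * ((n - j).choose i : ℝ) := by
      have := add_pow (-x) (1 : ℝ) (n - j)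
      simp only [one_pow, mul_one] at this
      rw [show (1 : ℝ) - x = -x + 1 by ring, this]
    rw [hpow, Finset.mul_sum]
    apply Finset.sum_congr rfl
    intro i _
    have h1 : j + i - j = i := by omega
    rw [h1, neg_pow, pow_add]
    ring
  rw [Finset.sum_congr rfl expand]
  rw [Finset.sum_comm' (t' := Finset.Icc k n) (s' := fun m => Finset.Icc k m)
    (by intro j m; simp only [Finset.mem_Icc]; omega)]
  apply Finset.sum_congr rfl
  intro m hm
  have hm' := Finset.mem_Icc.mp hm
  have inner : ∀ j ∈ Finset.Icc k m,
      (-1 : ℝ) ^ (m - j) * (n.choose j : ℝ) * ((n - j).choose (m - j) : ℝ) * x ^ m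
      = ((-1 : ℝ) ^ (m - k) * (n.choose m : ℝ) * x ^ m) *
          ((-1 : ℝ) ^ (j - k) * (m.choose j : ℝ)) := by
    intro j hj
    have hj' := Finset.mem_Icc.mp hj
    have hchoose : (n.choose j : ℝ) * ((n - j).choose (m - j) : ℝ)
        = (n.choose m : ℝ) * (m.choose j : ℝ) := by
      have := Nat.choose_mul (n := n) (k := m) (s := j) hj'.2
      exact_mod_cast (congrArg (fun t : ℕ => (t : ℝ)) this).symm
    have hsign : (-1 : ℝ) ^ (m - j) = (-1 : ℝ) ^ (m - k) * (-1 : ℝ) ^ (j - k) := by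
      have h1 : m - j + (j - k) = m - k := by omega
      have h2 : ((-1 : ℝ) ^ (j - k)) * ((-1 : ℝ) ^ (j - k)) = 1 := by
        rw [← pow_add, ← two_mul, pow_mul]
        norm_num
      calc (-1 : ℝ) ^ (m - j) = (-1 : ℝ) ^ (m - j) * (((-1 : ℝ) ^ (j - k)) * ((-1 : ℝ) ^ (j - k))) := by
            rw [h2, mul_one]
        _ = ((-1 : ℝ) ^ (m - j) * (-1 : ℝ) ^ (j - k)) * (-1 : ℝ) ^ (j - k) := by ring
        _ = (-1 : ℝ) ^ (m - k) * (-1 : ℝ) ^ (j - k) := by rw [← pow_add, h1]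
    calc (-1 : ℝ) ^ (m - j) * (n.choose j : ℝ) * ((n - j).choose (m - j) : ℝ) * x ^ m
        = (-1 : ℝ) ^ (m - j) * ((n.choose j : ℝ) * ((n - j).choose (m - j) : ℝ)) * x ^ m := by ring
      _ = ((-1 : ℝ) ^ (m - k) * (-1 : ℝ) ^ (j - k)) * ((n.choose m : ℝ) * (m.choose j : ℝ)) * x ^ m := by
          rw [hchoose, hsign]
      _ = ((-1 : ℝ) ^ (m - k) * (n.choose m : ℝ) * x ^ m) *
          ((-1 : ℝ) ^ (j - k) * (m.choose j : ℝ)) := by ring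
  rw [Finset.sum_congr rfl inner, ← Finset.mul_sum, alt_icc k m hk hm'.1]
  ring

theorem euler_factor_eq_local_factor (q n k : ℕ) (hq : 2 ≤ q) (hk : 2 ≤ k) (hkn : k ≤ n) :
    1 - ∑ j ∈ Finset.Icc k n,
          (-1 : ℝ) ^ (j - k) * (n.choose j : ℝ) * ((j - 1).choose (k - 1) : ℝ) * ((q : ℝ)⁻¹) ^ j =
      ∑ j ∈ Finset.range k, (n.choose j : ℝ) * (1 - (q : ℝ)⁻¹) ^ (n - j) * ((q : ℝ)⁻¹) ^ j := by
  set x : ℝ := (q : ℝ)⁻¹ with hx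
  have hk1 : 1 ≤ k := by omega
  have hbin : ∑ j ∈ Finset.range (n + 1), (n.choose j : ℝ) * x ^ j * (1 - x) ^ (n - j) = 1 := by
    have h := add_pow x (1 - x) n
    have hx1 : x + (1 - x) = 1 := by ring
    rw [hx1, one_pow] at h
    calc ∑ j ∈ Finset.range (n + 1), (n.choose j : ℝ) * x ^ j * (1 - x) ^ (n - j)
        = ∑ m ∈ Finset.range (n + 1), x ^ m * (1 - x) ^ (n - m) * (n.choose m : ℝ) := by
          apply Finset.sum_congr rfl; intro j _; ring
      _ = 1 := h.symm
  have hsplit : (∑ j ∈ Finset.range k, (n.choose j : ℝ) * x ^ j * (1 - x) ^ (n - j))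
      + ∑ j ∈ Finset.Icc k n, (n.choose j : ℝ) * x ^ j * (1 - x) ^ (n - j)
      = ∑ j ∈ Finset.range (n + 1), (n.choose j : ℝ) * x ^ j * (1 - x) ^ (n - j) := by
    rw [Finset.range_eq_Ico, Finset.range_eq_Ico, ← Finset.Ico_add_one_right_eq_Icc]
    exact Finset.sum_Ico_consecutive (fun j => (n.choose j : ℝ) * x ^ j * (1 - x) ^ (n - j)) (m := 0) (n := k) (k := n + 1) (by omega) (by omega)
  have hkey := key_identity x n k hk1 hkn
  have hfinal : ∑ j ∈ Finset.range k, (n.choose j : ℝ) * (1 - x) ^ (n - j) * x ^ j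
      = ∑ j ∈ Finset.range k, (n.choose j : ℝ) * x ^ j * (1 - x) ^ (n - j) := by
    apply Finset.sum_congr rfl
    intro j _
    ring
  rw [hfinal, ← hkey]
  linarith [hsplit, hbin]
end
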